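/- arXiv:2003.12029 — 6 statements merged into one kernel-verified Lean document; each statement's English description precedes it below -/
import Mathlib

section
/- Let G = (V_G, E_G) be a graph, δ: E_G → {blue, red} an edge coloring, and let r, b: V_G → ℤ be functions such that for every edge uv ∈ E_G: if δ(uv) = red then r(u) = r(v) and b(u) ≠ b(v), and if δ(uv) = blue then b(u) = b(v) and r(u) ≠ r(v). For α ∈ ℝ define the placement p_α: V_G → ℝ² by p_α(v) = b(v)·(1,0) + r(v)·(sin α, cos α). Then for every edge uv ∈ E_G and every α ∈ ℝ, p_α(u) ≠ p_α(v) and ‖p_α(u) − p_α(v)‖ = ‖p_0(u) − p_0(v)‖; in particular, all frameworks (G, p_α) are equivalent to (G, p_0). -/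
open SimpleGraph Real

/-- The Euclidean plane. -/
abbrev Plane : Type := EuclideanSpace ℝ (Fin 2)

variable {V : Type*}

/-- A placement of a graph in the plane: endpoints of edges do not coincide. -/
def IsPlacement (G : SimpleGraph V) (p : V → Plane) : Prop :=
  ∀ ⦃u v : V⦄, G.Adj u v → p u ≠ p v

/-- Two placements are equivalent as frameworks on `G` if corresponding
edge lengths agree. -/
def FrameworkEquiv (G : SimpleGraph V) (p q : V → Plane) : Prop :=
  ∀ ⦃u v : V⦄, G.Adj u v → dist (p u) (p v) = dist (q u) (q v)

/-- Two placements are congruent if all pairwise distances agree. -/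
def PCongruent (p q : V → Plane) : Prop :=
  ∀ u v : V, dist (p u) (p v) = dist (q u) (q v)

/-- A flex of the framework `(G, p)`: a continuous path of placements on `[0,1]`
starting at `p`, each equivalent to `(G, p)`. -/
def IsFlex (G : SimpleGraph V) (p : V → Plane) (f : ℝ → V → Plane) : Prop :=
  ContinuousOn f (Set.Icc 0 1) ∧ f 0 = p ∧
    ∀ t ∈ Set.Icc (0 : ℝ) 1, IsPlacement G (f t) ∧ FrameworkEquiv G p (f t)

/-- A flex is trivial if every placement along it is congruent to the initial one. -/
def IsTrivialFlex (p : V → Plane) (f : ℝ → V → Plane) : Prop :=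
  ∀ t ∈ Set.Icc (0 : ℝ) 1, PCongruent (f t) p

/-- The placement `p` induces the labeling `lam`. -/
def Induces (G : SimpleGraph V) (p : V → Plane) (lam : Sym2 V → ℝ) : Prop :=
  ∀ ⦃u v : V⦄, G.Adj u v → dist (p u) (p v) = lam s(u, v)

/-- A labeling (positive on the edges) is flexible if some framework inducing it
has a non-trivial flex. -/
def IsFlexibleLabeling (G : SimpleGraph V) (lam : Sym2 V → ℝ) : Prop :=
  (∀ e ∈ G.edgeSet, 0 < lam e) ∧
    ∃ p : V → Plane, Induces G p lam ∧ ∃ f, IsFlex G p f ∧ ¬ IsTrivialFlex p f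

/-- A labeling is a proper flexible labeling if some framework inducing it has a
non-trivial flex in which all but finitely many placements are injective. -/
def IsProperFlexibleLabeling (G : SimpleGraph V) (lam : Sym2 V → ℝ) : Prop :=
  (∀ e ∈ G.edgeSet, 0 < lam e) ∧
    ∃ p : V → Plane, Induces G p lam ∧ ∃ f, IsFlex G p f ∧ ¬ IsTrivialFlex p f ∧
      {t ∈ Set.Icc (0 : ℝ) 1 | ¬ Function.Injective (f t)}.Finite

/-- A graph is movable if it has a proper flexible labeling. -/
def Movable (G : SimpleGraph V) : Prop :=
  ∃ lam : Sym2 V → ℝ, IsProperFlexibleLabeling G lam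

/-- A NAC-coloring: a surjective 2-coloring (`true` = red, `false` = blue) of the
edges such that every cycle is either monochromatic or contains at least two
edges of each color. -/
def IsNACColoring (G : SimpleGraph V) (δ : Sym2 V → Bool) : Prop :=
  (∃ e ∈ G.edgeSet, δ e = true) ∧ (∃ e ∈ G.edgeSet, δ e = false) ∧
    ∀ ⦃v : V⦄ (c : G.Walk v v), c.IsCycle →
      (∀ e ∈ c.edges, δ e = true) ∨ (∀ e ∈ c.edges, δ e = false) ∨
        (2 ≤ (c.edges.filter (fun e => δ e)).length ∧
          2 ≤ (c.edges.filter (fun e => !(δ e))).length)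

/-- The point `(x, y)` of the Euclidean plane. -/
noncomputable def pt (x y : ℝ) : Plane :=
  (WithLp.equiv 2 (Fin 2 → ℝ)).symm ![x, y]

/-- The grid construction placement: `p_α(v) = b(v)•(1,0) + r(v)•(sin α, cos α)`. -/
noncomputable def gridPlacement (r b : V → ℤ) (α : ℝ) (v : V) : Plane :=
  (b v : ℝ) • pt 1 0 + (r v : ℝ) • pt (Real.sin α) (Real.cos α)


lemma norm_pt_unit (x y : ℝ) (h : x ^ 2 + y ^ 2 = 1) : ‖pt x y‖ = 1 := by
  rw [EuclideanSpace.norm_eq]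
  simp [pt, Fin.sum_univ_two, sq_abs]
  exact h

lemma dist_smul_unit (w : Plane) (hw : ‖w‖ = 1) (a c : ℝ) (u : Plane) :
    dist (a • w + u) (c • w + u) = |a - c| := by
  rw [dist_eq_norm]
  have : a • w + u - (c • w + u) = (a - c) • w := by
    rw [sub_smul]; abel
  rw [this, norm_smul, hw, mul_one, Real.norm_eq_abs]

/-- The grid construction yields, for every `α`, a placement of `G` all of whose
edge lengths agree with those at `α = 0`; in particular all the frameworks
`(G, p_α)` are equivalent to `(G, p_0)`. -/
theorem gridPlacement_is_flex (G : SimpleGraph V) (δ : Sym2 V → Bool)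
    (r b : V → ℤ)
    (hred : ∀ u v : V, G.Adj u v → δ s(u, v) = true → r u = r v ∧ b u ≠ b v)
    (hblue : ∀ u v : V, G.Adj u v → δ s(u, v) = false → b u = b v ∧ r u ≠ r v) :
    ∀ u v : V, G.Adj u v → ∀ α : ℝ,
      gridPlacement r b α u ≠ gridPlacement r b α v ∧
      dist (gridPlacement r b α u) (gridPlacement r b α v) =
        dist (gridPlacement r b 0 u) (gridPlacement r b 0 v) := by
  intro u v huv α
  have hunit : ∀ β : ℝ, ‖pt (Real.sin β) (Real.cos β)‖ = 1 := fun β =>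
    norm_pt_unit _ _ (by rw [add_comm]; exact Real.cos_sq_add_sin_sq β)
  have hone : ‖pt 1 0‖ = 1 := norm_pt_unit 1 0 (by norm_num)
  cases hδ : δ s(u, v) with
  | true =>
    obtain ⟨hr, hb⟩ := hred u v huv hδ
    have key : ∀ β : ℝ, dist (gridPlacement r b β u) (gridPlacement r b β v)
        = |(b u : ℝ) - (b v : ℝ)| := by
      intro β
      unfold gridPlacement
      rw [hr]
      exact dist_smul_unit _ hone _ _ _
    have hne : (0:ℝ) < |(b u : ℝ) - (b v : ℝ)| := by
      rw [abs_pos, sub_ne_zero]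
      exact_mod_cast fun h => hb (by exact_mod_cast h)
    refine ⟨fun h => ?_, by rw [key, key]⟩
    have := dist_eq_zero.mpr h
    rw [key] at this
    rw [this] at hne
    exact lt_irrefl 0 hne
  | false =>
    obtain ⟨hbb, hrr⟩ := hblue u v huv hδ
    have key : ∀ β : ℝ, dist (gridPlacement r b β u) (gridPlacement r b β v)
        = |(r u : ℝ) - (r v : ℝ)| := by
      intro β
      unfold gridPlacement
      rw [hbb]
      have comm : ∀ w : V, (b v : ℝ) • pt 1 0 + (r w : ℝ) • pt (Real.sin β) (Real.cos β)
          = (r w : ℝ) • pt (Real.sin β) (Real.cos β) + (b v : ℝ) • pt 1 0 := fun w => add_comm _ _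
      rw [comm u, comm v]
      exact dist_smul_unit _ (hunit β) _ _ _
    have hne : (0:ℝ) < |(r u : ℝ) - (r v : ℝ)| := by
      rw [abs_pos, sub_ne_zero]
      exact_mod_cast fun h => hrr (by exact_mod_cast h)
    refine ⟨fun h => ?_, by rw [key, key]⟩
    have := dist_eq_zero.mpr h
    rw [key] at this
    rw [this] at hne
    exact lt_irrefl 0 hne
end

section
/- Let δ be a NAC-coloring of a graph G. If two edges e and f of G are Δ-connected, i.e., there is a finite sequence of edges e = e_0, e_1, …, e_k = f such that consecutive edges e_{i−1}, e_i lie in a common 3-cycle of G, then δ(e) = δ(f). Hence all edges of a Δ-connected component of G receive the same color in any NAC-coloring. -/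
open SimpleGraph Real

variable {V : Type*}

/-- Two edges lie in a common 3-cycle of `G`. -/
def ShareTriangle (G : SimpleGraph V) (e f : Sym2 V) : Prop :=
  ∃ u v w : V, G.Adj u v ∧ G.Adj v w ∧ G.Adj u w ∧
    e ∈ ({s(u, v), s(v, w), s(u, w)} : Set (Sym2 V)) ∧
    f ∈ ({s(u, v), s(v, w), s(u, w)} : Set (Sym2 V))

lemma triangle_same_color (G : SimpleGraph V) (δ : Sym2 V → Bool)
    (hδ : IsNACColoring G δ) {u v w : V} (huv : G.Adj u v) (hvw : G.Adj v w)
    (huw : G.Adj u w) :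
    δ s(u, v) = δ s(v, w) ∧ δ s(u, v) = δ s(u, w) := by
  classical
  let c : G.Walk u u := Walk.cons huv (Walk.cons hvw (Walk.cons huw.symm Walk.nil))
  have hedges : c.edges = [s(u, v), s(v, w), s(w, u)] := rfl
  have hcyc : c.IsCycle := by
    constructor
    · constructor
      · constructor
        have ne1 := huv.ne
        have ne2 := hvw.ne
        have ne3 := huw.ne
        rw [hedges]
        simp only [List.nodup_cons, List.mem_cons, List.mem_singleton, List.not_mem_nil,
          List.nodup_nil, and_true, not_false_iff, or_false, Sym2.eq_iff]
        aesop
      · simp [c]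
    · have : c.support = [u, v, w, u] := rfl
      rw [this]
      simp only [List.tail_cons, List.nodup_cons, List.mem_cons, List.mem_singleton,
        List.not_mem_nil, List.nodup_nil, and_true, not_or, or_false, not_false_iff]
      exact ⟨⟨G.ne_of_adj hvw, fun h => G.ne_of_adj huv h.symm⟩,
        fun h => G.ne_of_adj huw h.symm⟩
  have hwu : (s(w, u) : Sym2 V) = s(u, w) := Sym2.eq_swap
  rcases hδ.2.2 c hcyc with hall | hall | ⟨h1, h2⟩
  · rw [hedges] at hall
    have e1 := hall s(u, v) (by simp)
    have e2 := hall s(v, w) (by simp)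
    have e3 := hall s(w, u) (by simp)
    rw [hwu] at e3
    exact ⟨e1.trans e2.symm, e1.trans e3.symm⟩
  · rw [hedges] at hall
    have e1 := hall s(u, v) (by simp)
    have e2 := hall s(v, w) (by simp)
    have e3 := hall s(w, u) (by simp)
    rw [hwu] at e3
    exact ⟨e1.trans e2.symm, e1.trans e3.symm⟩
  · exfalso
    have hlen : (c.edges.filter (fun e => δ e)).length
        + (c.edges.filter (fun e => !(δ e))).length = 3 := by
      rw [hedges]
      simp only [List.filter]
      cases δ s(u, v) <;> cases δ s(v, w) <;> cases δ s(w, u) <;> simp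
    omega

/-- Δ-connected edges (joined by a chain of edges in which consecutive ones lie in
a common 3-cycle) receive the same color in any NAC-coloring. -/
theorem delta_connected_same_color (G : SimpleGraph V) (δ : Sym2 V → Bool)
    (hδ : IsNACColoring G δ) (e f : Sym2 V)
    (h : Relation.ReflTransGen (ShareTriangle G) e f) :
    δ e = δ f := by
  induction h with
  | refl => rfl
  | tail _ hst ih =>
    rename_i b c _
    obtain ⟨u, v, w, huv, hvw, huw, hb, hc⟩ := hst
    obtain ⟨h1, h2⟩ := triangle_same_color G δ hδ huv hvw huw
    have key : δ b = δ c := by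
      simp only [Set.mem_insert_iff, Set.mem_singleton_iff] at hb hc
      rcases hb with rfl | rfl | rfl <;> rcases hc with rfl | rfl | rfl <;>
        simp_all
    exact ih.trans key
end

section
/- Let G be a graph with an injective embedding ω: V_G → ℝ³ such that for every edge uv ∈ E_G, the vector ω(u) − ω(v) is parallel to one of the four vectors (1,0,0), (0,1,0), (0,0,1), (−1,−1,−1), and all four directions are present among the edges. Then G is movable. -/
open SimpleGraph Real

variable {V : Type*}

/-- The four admissible edge directions in `ℝ³`. -/
def spatialDirs : Set (Fin 3 → ℝ) :=
  {![1, 0, 0], ![0, 1, 0], ![0, 0, 1], ![-1, -1, -1]}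

/-!
Identify the plane with `ℂ` and place a vertex `v` with `ω v = (x, y, z)` at
`x A(t) + y B(t) + z C(t)`, where `A, B, C` are unit vectors whose sum is constant. An edge along
one of the four directions then has the constant length `|c| ‖A‖`, `|c| ‖B‖`, `|c| ‖C‖` or
`|c| ‖A + B + C‖`. The angle between `A` and `B` changes, so the motion is not a congruence, and
for every `(a, b, c) ≠ 0` the combination `a A + b B + c C` vanishes at no more than one time
`t ∈ [0, 1]`, so vertices collide only at finitely many times.
-/

open Real Complex ComplexConjugate
open scoped RealInnerProductSpace

lemma PCongruent.inner_sub_sub {V : Type*} {p q : V → Plane} (h : PCongruent p q) (a b c d : V) :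
    ⟪p a - p b, p c - p d⟫ = ⟪q a - q b, q c - q d⟫ := by
  have polar (x : V → Plane) : ⟪x a - x b, x c - x d⟫ =
      (dist (x a) (x d) ^ 2 - dist (x b) (x d) ^ 2 - dist (x a) (x c) ^ 2
        + dist (x b) (x c) ^ 2) / 2 := by
    rw [← sub_sub_sub_cancel_right (x a) (x b) (x d), inner_sub_left,
      real_inner_eq_norm_mul_self_add_norm_mul_self_sub_norm_sub_mul_self_div_two,
      real_inner_eq_norm_mul_self_add_norm_mul_self_sub_norm_sub_mul_self_div_two,
      sub_sub_sub_cancel_right, sub_sub_sub_cancel_right]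
    simp only [dist_eq_norm]
    ring
  rw [polar p, polar q, h a d, h b d, h a c, h b c]

theorem finite_setOf_not_injective_comp {ι V E F 𝓕 : Type*} [Finite V] [AddGroup E] [AddGroup F]
    [FunLike 𝓕 E F] [AddMonoidHomClass 𝓕 E F] {ω : V → E} (hω : Function.Injective ω)
    {L : ι → 𝓕} {s : Set ι} (hL : ∀ x ≠ 0, {t ∈ s | L t x = 0}.Finite) :
    {t ∈ s | ¬ Function.Injective (L t ∘ ω)}.Finite := by
  refine (Set.finite_iUnion fun p : {p : V × V // p.1 ≠ p.2} =>
    hL _ (sub_ne_zero.2 (hω.ne p.2))).subset ?_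
  rintro t ⟨hts, hnot⟩
  obtain ⟨a, b, hab, hne⟩ := Function.not_injective_iff.1 hnot
  exact Set.mem_iUnion.2 ⟨⟨(a, b), hne⟩, hts, by rw [map_sub, sub_eq_zero]; exact hab⟩

theorem movable_of_motion {V : Type*} (G : SimpleGraph V) (f : ℝ → V → Plane) (hf : Continuous f)
    (hlen : ∀ ⦃u v⦄, G.Adj u v → ∀ t, dist (f t u) (f t v) = dist (f 0 u) (f 0 v))
    (hne : ∀ ⦃u v⦄, G.Adj u v → f 0 u ≠ f 0 v) (hcongr : ¬ PCongruent (f 1) (f 0))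
    (hfinite : {t ∈ Set.Icc (0 : ℝ) 1 | ¬ Function.Injective (f t)}.Finite) : Movable G := by
  refine ⟨Sym2.lift ⟨fun u v => dist (f 0 u) (f 0 v), fun u v => dist_comm _ _⟩, ?_, f 0,
    fun u v _ => rfl, f, ⟨hf.continuousOn, rfl, fun t _ => ⟨?_, ?_⟩⟩,
    fun htriv => hcongr (htriv 1 ⟨zero_le_one, le_rfl⟩), hfinite⟩
  · rintro ⟨u, v⟩ huv
    exact dist_pos.2 (hne huv)
  · intro u v huv
    rw [← dist_pos, hlen huv]
    exact dist_pos.2 (hne huv)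
  · exact fun u v huv => (hlen huv t).symm

theorem movable_of_linear_motion {V E : Type*} [Finite V] [AddCommGroup E] [Module ℝ E]
    (G : SimpleGraph V) {ω : V → E} (hω : Function.Injective ω) (L : ℝ → E →ₗ[ℝ] ℂ)
    (hcont : ∀ x, Continuous fun t => L t x)
    (hlen : ∀ ⦃u v⦄, G.Adj u v → ∀ t, ‖L t (ω u - ω v)‖ = ‖L 0 (ω u - ω v)‖)
    (hne : ∀ ⦃u v⦄, G.Adj u v → L 0 (ω u - ω v) ≠ 0)
    (hzero : ∀ x ≠ 0, {t ∈ Set.Icc (0 : ℝ) 1 | L t x = 0}.Finite)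
    (hflex : ∃ a b c d, ⟪L 1 (ω a - ω b), L 1 (ω c - ω d)⟫ ≠ ⟪L 0 (ω a - ω b), L 0 (ω c - ω d)⟫) :
    Movable G := by
  let e := Complex.orthonormalBasisOneI.repr
  have hsub (t : ℝ) (a b : V) : e (L t (ω a)) - e (L t (ω b)) = e (L t (ω a - ω b)) := by
    rw [map_sub, map_sub]
  refine movable_of_motion G (fun t v => e (L t (ω v)))
    (continuous_pi fun v => e.continuous.comp (hcont _)) (fun u v huv t => ?_) (fun u v huv => ?_)
    (fun hcongr => ?_) ?_
  · simp only [dist_eq_norm, hsub, LinearIsometryEquiv.norm_map, hlen huv t]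
  · rw [Ne, ← sub_eq_zero, hsub, LinearIsometryEquiv.map_eq_zero_iff]
    exact hne huv
  · obtain ⟨a, b, c, d, hne⟩ := hflex
    apply hne
    simpa only [hsub, LinearIsometryEquiv.inner_map_map] using hcongr.inner_sub_sub a b c d
  · exact (finite_setOf_not_injective_comp hω hzero).subset fun t ⟨ht, hnot⟩ =>
      ⟨ht, fun hinj => hnot (e.injective.comp hinj)⟩

namespace SpatialMotion

/- `A = e^{iπt}`; `B` and `C` are the two unit vectors with `B + C = 1/2 - A`, namely
`(1/2 - A)(1/2 ± i h)` with `h` chosen so that `‖1/2 ± i h‖ = ‖1/2 - A‖⁻¹`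
(possible because `‖1/2 - A‖ ≤ 3/2 < 2`). -/
noncomputable def armA (t : ℝ) : ℂ := exp (↑(π * t) * I)

noncomputable def gap (t : ℝ) : ℂ := 1 / 2 - armA t

noncomputable def height (t : ℝ) : ℝ := √((‖gap t‖ ^ 2)⁻¹ - 1 / 4)

noncomputable def tilt (t : ℝ) : ℂ := ⟨1 / 2, height t⟩

noncomputable def armB (t : ℝ) : ℂ := gap t * tilt t

noncomputable def armC (t : ℝ) : ℂ := gap t * conj (tilt t)

lemma norm_armA (t : ℝ) : ‖armA t‖ = 1 := norm_exp_ofReal_mul_I _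

lemma norm_gap_le (t : ℝ) : ‖gap t‖ ≤ 3 / 2 := by
  calc ‖gap t‖ ≤ ‖(1 / 2 : ℂ)‖ + ‖armA t‖ := norm_sub_le _ _
    _ = 3 / 2 := by rw [norm_armA]; norm_num

lemma gap_ne_zero (t : ℝ) : gap t ≠ 0 := by
  intro h
  have := congrArg norm (sub_eq_zero.1 h)
  rw [norm_armA] at this
  norm_num at this

lemma quarter_lt_inv_sq_norm_gap (t : ℝ) : 1 / 4 < (‖gap t‖ ^ 2)⁻¹ := by
  have h0 := norm_pos_iff.2 (gap_ne_zero t)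
  rw [lt_inv_comm₀ (by norm_num) (by positivity)]
  nlinarith [norm_gap_le t]

lemma height_pos (t : ℝ) : 0 < height t :=
  Real.sqrt_pos.2 (sub_pos.2 (quarter_lt_inv_sq_norm_gap t))

lemma sq_norm_tilt (t : ℝ) : ‖tilt t‖ ^ 2 = (‖gap t‖ ^ 2)⁻¹ := by
  rw [Complex.sq_norm, tilt, normSq_mk, ← sq, ← sq, height,
    Real.sq_sqrt (sub_pos.2 (quarter_lt_inv_sq_norm_gap t)).le]
  ring

lemma norm_gap_mul_eq_one {z : ℂ} (t : ℝ) (hz : ‖z‖ = ‖tilt t‖) : ‖gap t * z‖ = 1 := by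
  have h0 := norm_pos_iff.2 (gap_ne_zero t)
  rw [← pow_eq_one_iff_of_nonneg (norm_nonneg _) two_ne_zero, norm_mul, mul_pow, hz,
    sq_norm_tilt, mul_inv_cancel₀ (by positivity)]

lemma norm_armB (t : ℝ) : ‖armB t‖ = 1 := norm_gap_mul_eq_one t rfl

lemma norm_armC (t : ℝ) : ‖armC t‖ = 1 := norm_gap_mul_eq_one t (RCLike.norm_conj _)

lemma armB_add_armC (t : ℝ) : armB t + armC t = gap t := by
  rw [armB, armC, ← mul_add, add_conj, tilt]
  norm_num

lemma armA_add_armB_add_armC (t : ℝ) : armA t + armB t + armC t = 1 / 2 := by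
  rw [add_assoc, armB_add_armC, gap, add_sub_cancel]

lemma continuous_armA : Continuous armA := by unfold armA; fun_prop

lemma continuous_gap : Continuous gap := continuous_const.sub continuous_armA

lemma continuous_height : Continuous height :=
  Real.continuous_sqrt.comp (((continuous_gap.norm.pow 2).inv₀ fun t =>
    pow_ne_zero 2 (norm_ne_zero_iff.2 (gap_ne_zero t))).sub continuous_const)

lemma continuous_tilt : Continuous tilt := by
  have := continuous_height
  rw [show tilt = fun t => ((1 / 2 : ℝ) : ℂ) + height t * I from funext fun t => mk_eq_add_mul_I _ _]
  fun_prop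

lemma continuous_armB : Continuous armB := continuous_gap.mul continuous_tilt

lemma continuous_armC : Continuous armC := continuous_gap.mul (continuous_conj.comp continuous_tilt)

lemma armA_re (t : ℝ) : (armA t).re = Real.cos (π * t) := exp_ofReal_mul_I_re _

lemma armA_im (t : ℝ) : (armA t).im = Real.sin (π * t) := exp_ofReal_mul_I_im _

lemma sq_norm_gap (t : ℝ) : ‖gap t‖ ^ 2 = 5 / 4 - Real.cos (π * t) := by
  rw [Complex.sq_norm, gap, normSq_apply]
  simp only [sub_re, sub_im, armA_re, armA_im]
  norm_num
  nlinarith [Real.sin_sq_add_cos_sq (π * t)]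

lemma armA_mul_conj_gap (t : ℝ) : armA t * conj (gap t) = armA t / 2 - 1 := by
  have hA : armA t * conj (armA t) = 1 := by
    rw [mul_conj, ← Complex.sq_norm, norm_armA]; norm_num
  simp only [gap, map_sub, map_div₀, map_one, map_ofNat]
  linear_combination -hA

/-- Multiplying by `conj (gap t)` turns a vanishing combination into one whose real and imaginary
parts involve only `cos (π t)`, `sin (π t)` and the height. -/
lemma combination_mul_conj_gap {a b c t : ℝ} (h : a • armA t + b • armB t + c • armC t = 0) :
    (a : ℂ) * (armA t / 2 - 1) + (‖gap t‖ ^ 2 : ℝ) * (b * tilt t + c * conj (tilt t)) = 0 := by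
  have hg : gap t * conj (gap t) = (‖gap t‖ ^ 2 : ℝ) := by rw [mul_conj, Complex.sq_norm]
  simp only [Complex.real_smul, armB, armC] at h
  linear_combination conj (gap t) * h - (a : ℂ) * armA_mul_conj_gap t
    - (b * tilt t + c * conj (tilt t)) * hg

lemma cos_relation {a b c t : ℝ} (h : a • armA t + b • armB t + c • armC t = 0) :
    a * (Real.cos (π * t) / 2 - 1) + ‖gap t‖ ^ 2 * ((b + c) / 2) = 0 := by
  have := congrArg re (combination_mul_conj_gap h)
  simp only [add_re, re_ofReal_mul, sub_re, div_ofNat_re, armA_re, one_re, tilt, conj_re,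
    zero_re] at this
  linear_combination this

lemma sin_relation {a b c t : ℝ} (h : a • armA t + b • armB t + c • armC t = 0) :
    a * Real.sin (π * t) / 2 + ‖gap t‖ ^ 2 * ((b - c) * height t) = 0 := by
  have := congrArg im (combination_mul_conj_gap h)
  simp only [add_im, im_ofReal_mul, sub_im, div_ofNat_im, armA_im, one_im, tilt, conj_im,
    zero_im] at this
  linear_combination this

lemma ne_add_of_combination_eq_zero {a b c t : ℝ} (hne : ¬(a = 0 ∧ b = 0 ∧ c = 0))
    (h : a • armA t + b • armB t + c • armC t = 0) : a ≠ b + c := by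
  intro habc
  have hcos := cos_relation h
  rw [sq_norm_gap, habc] at hcos
  have hbc : b + c = 0 := by linarith
  have hg := pow_pos (norm_pos_iff.2 (gap_ne_zero t)) 2
  have hsin := sin_relation h
  rw [habc, hbc, zero_mul, zero_div, zero_add] at hsin
  have hb_c : b - c = 0 := by
    simpa [hg.ne', (height_pos t).ne'] using hsin
  exact hne ⟨by linarith, by linarith, by linarith⟩

lemma cos_eq_of_combination_eq_zero {a b c t : ℝ} (hne : ¬(a = 0 ∧ b = 0 ∧ c = 0))
    (h : a • armA t + b • armB t + c • armC t = 0) :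
    Real.cos (π * t) = (2 * a - 5 / 4 * (b + c)) / (a - b - c) := by
  have hcos := cos_relation h
  rw [sq_norm_gap] at hcos
  have habc := ne_add_of_combination_eq_zero hne h
  rw [eq_div_iff (by contrapose! habc; linarith)]
  linear_combination 2 * hcos

lemma subsingleton_combination_eq_zero {a b c : ℝ} (hne : ¬(a = 0 ∧ b = 0 ∧ c = 0)) :
    {t ∈ Set.Icc (0 : ℝ) 1 | a • armA t + b • armB t + c • armC t = 0}.Subsingleton := by
  rintro s ⟨hs, hs0⟩ t ⟨ht, ht0⟩
  have hmem {r : ℝ} (hr : r ∈ Set.Icc (0 : ℝ) 1) : π * r ∈ Set.Icc 0 π :=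
    ⟨by nlinarith [pi_pos, hr.1], by nlinarith [pi_pos, hr.2]⟩
  have := Real.injOn_cos (hmem hs) (hmem ht)
    ((cos_eq_of_combination_eq_zero hne hs0).trans (cos_eq_of_combination_eq_zero hne ht0).symm)
  exact mul_left_cancel₀ pi_ne_zero this

lemma inner_armA_armB_zero : ⟪armA 0, armB 0⟫ = -1 / 4 := by
  simp [Complex.inner, armA, armB, gap, tilt]
  norm_num

lemma inner_armA_armB_one : ⟪armA 1, armB 1⟫ = -3 / 4 := by
  simp [Complex.inner, armA, armB, gap, tilt]
  norm_num

end SpatialMotion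

open SpatialMotion

noncomputable def spatialMotion (t : ℝ) : (Fin 3 → ℝ) →ₗ[ℝ] ℂ :=
  Fintype.linearCombination ℝ ![armA t, armB t, armC t]

lemma spatialMotion_apply (t : ℝ) (x : Fin 3 → ℝ) :
    spatialMotion t x = x 0 • armA t + x 1 • armB t + x 2 • armC t := by
  simp [spatialMotion, Fintype.linearCombination_apply, Fin.sum_univ_three]

lemma spatialMotion_apply_e0 (t : ℝ) : spatialMotion t ![1, 0, 0] = armA t := by
  simp [spatialMotion_apply]

lemma spatialMotion_apply_e1 (t : ℝ) : spatialMotion t ![0, 1, 0] = armB t := by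
  simp [spatialMotion_apply]

lemma continuous_spatialMotion_apply (x : Fin 3 → ℝ) : Continuous fun t => spatialMotion t x := by
  simp only [spatialMotion_apply]
  have := continuous_armA; have := continuous_armB; have := continuous_armC
  fun_prop

lemma exists_norm_spatialMotion_eq {d : Fin 3 → ℝ} (hd : d ∈ spatialDirs) :
    ∃ r > 0, ∀ t, ‖spatialMotion t d‖ = r := by
  simp only [spatialDirs, Set.mem_insert_iff, Set.mem_singleton_iff] at hd
  rcases hd with rfl | rfl | rfl | rfl
  · exact ⟨1, one_pos, fun t => by simp [spatialMotion_apply, norm_armA]⟩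
  · exact ⟨1, one_pos, fun t => by simp [spatialMotion_apply, norm_armB]⟩
  · exact ⟨1, one_pos, fun t => by simp [spatialMotion_apply, norm_armC]⟩
  · refine ⟨1 / 2, by norm_num, fun t => ?_⟩
    have hsum : -armA t + -armB t + -armC t = -(1 / 2) := by
      rw [← armA_add_armB_add_armC]; ring
    simp [spatialMotion_apply, hsum]

lemma subsingleton_spatialMotion_eq_zero {x : Fin 3 → ℝ} (hx : x ≠ 0) :
    {t ∈ Set.Icc (0 : ℝ) 1 | spatialMotion t x = 0}.Subsingleton := by
  simp only [spatialMotion_apply]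
  refine subsingleton_combination_eq_zero fun h0 => hx ?_
  ext i
  fin_cases i <;> simp [h0]

/-- A graph with an injective spatial embedding whose edges are parallel to the four
directions `(1,0,0)`, `(0,1,0)`, `(0,0,1)`, `(-1,-1,-1)`, all four occurring,
is movable. -/
theorem movable_of_spatial_embedding [Fintype V] (G : SimpleGraph V)
    (ω : V → Fin 3 → ℝ) (hinj : Function.Injective ω)
    (hpar : ∀ u v : V, G.Adj u v → ∃ d ∈ spatialDirs, ∃ c : ℝ, ω u - ω v = c • d)
    (hall : ∀ d ∈ spatialDirs, ∃ u v : V, G.Adj u v ∧ ∃ c : ℝ, ω u - ω v = c • d) :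
    Movable G := by
  have coeff_ne_zero {u v : V} {c : ℝ} {d : Fin 3 → ℝ} (huv : G.Adj u v) (h : ω u - ω v = c • d) :
      c ≠ 0 := by
    rintro rfl
    exact huv.ne (hinj (sub_eq_zero.1 (by rw [h, zero_smul])))
  refine movable_of_linear_motion G hinj spatialMotion continuous_spatialMotion_apply
    (fun u v huv t => ?_) (fun u v huv => ?_)
    (fun x hx => (subsingleton_spatialMotion_eq_zero hx).finite) ?_
  · obtain ⟨d, hd, c, hcd⟩ := hpar u v huv
    obtain ⟨r, -, hr⟩ := exists_norm_spatialMotion_eq hd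
    rw [hcd, map_smul, map_smul, norm_smul, norm_smul, hr, hr]
  · obtain ⟨d, hd, c, hcd⟩ := hpar u v huv
    obtain ⟨r, hr0, hr⟩ := exists_norm_spatialMotion_eq hd
    rw [hcd, map_smul]
    exact smul_ne_zero (coeff_ne_zero huv hcd) (norm_pos_iff.1 (hr 0 ▸ hr0))
  · obtain ⟨a, b, hab, c, hc⟩ := hall ![1, 0, 0] (by simp [spatialDirs])
    obtain ⟨a', b', hab', c', hc'⟩ := hall ![0, 1, 0] (by simp [spatialDirs])
    refine ⟨a, b, a', b', ?_⟩
    simp only [hc, hc', map_smul, real_inner_smul_left, real_inner_smul_right,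
      spatialMotion_apply_e0, spatialMotion_apply_e1, inner_armA_armB_zero, inner_armA_armB_one]
    have := mul_ne_zero (coeff_ne_zero hab hc) (coeff_ne_zero hab' hc')
    contrapose! this
    linarith
end

section
/- Let G be a graph with an injective embedding ω: V_G → ℝ³ such that for every edge uv ∈ E_G, the vector ω(u) − ω(v) is parallel to one of the four vectors (1,0,0), (0,1,0), (0,0,1), (−1,−1,−1), and all four directions are present among the edges. Then there exist two NAC-colorings δ₁, δ₂ of G such that for any two edges e, f ∈ E_G, the vectors ω-images of e and f are parallel if and only if δ₁(e) = δ₁(f) and δ₂(e) = δ₂(f). -/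
open SimpleGraph Real

variable {V : Type*}

/-!
Colour an edge red for `δ₁` when the potential `w ↦ ω(w)₀ - ω(w)₁` changes along it. For the
four admissible directions, `x₀ - x₁` changes exactly along the edges where `x₂` does not, so
the blue edges are those along which the potential `w ↦ ω(w)₂` changes. A potential cannot change
exactly once along a closed walk, hence no cycle has exactly one edge of either colour. The
colouring `δ₂` is the same with `x₁` and `x₂` exchanged. The pair `(δ₁, δ₂)` of an edge records
which of `x₀ - x₁`, `x₀ - x₂` vanish on its edge vector; this is invariant under rescaling and
separates the four directions.
-/

namespace SimpleGraph

variable {G : SimpleGraph V} {α β : Type*} [DecidableEq α] [DecidableEq β]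

def edgeChanges (f : V → α) : Sym2 V → Bool :=
  Sym2.lift ⟨fun u v => decide (f u ≠ f v), fun _ _ => by simp only [ne_comm]⟩

@[simp]
theorem edgeChanges_mk (f : V → α) (u v : V) : edgeChanges f s(u, v) = decide (f u ≠ f v) :=
  rfl

namespace Walk

theorem eq_of_forall_edgeChanges_eq_false {f : V → α} {u v : V} (w : G.Walk u v)
    (h : ∀ e ∈ w.edges, edgeChanges f e = false) : f u = f v := by
  induction w with
  | nil => rfl
  | cons _ w ih =>
    simp only [edges_cons, List.mem_cons, forall_eq_or_imp, edgeChanges_mk,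
      decide_eq_false_iff_not, not_not] at h
    exact h.1.trans (ih h.2)

theorem ne_of_length_filter_edgeChanges_eq_one {f : V → α} {u v : V} (w : G.Walk u v)
    (h : (w.edges.filter (edgeChanges f)).length = 1) : f u ≠ f v := by
  induction w with
  | nil => simp at h
  | @cons u u' _ _ w ih =>
    rw [edges_cons, List.filter_cons] at h
    by_cases hu : f u = f u'
    · simp only [edgeChanges_mk, hu, ne_eq, not_true_eq_false, decide_false] at h
      exact hu ▸ ih h
    · simp only [edgeChanges_mk, ne_eq, hu, not_false_eq_true, decide_true, if_true,
        List.length_cons, add_eq_right, List.length_eq_zero_iff, List.filter_eq_nil_iff,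
        Bool.not_eq_true] at h
      exact fun huv => hu (huv.trans (w.eq_of_forall_edgeChanges_eq_false h).symm)

theorem length_filter_edgeChanges_ne_one (f : V → α) {v : V} (c : G.Walk v v) :
    (c.edges.filter (edgeChanges f)).length ≠ 1 :=
  fun h => c.ne_of_length_filter_edgeChanges_eq_one h rfl

theorem two_le_length_filter_edgeChanges (f : V → α) {v : V} (c : G.Walk v v)
    (h : ∃ e ∈ c.edges, edgeChanges f e = true) :
    2 ≤ (c.edges.filter (edgeChanges f)).length := by
  have hpos : 0 < (c.edges.filter (edgeChanges f)).length := List.length_filter_pos_iff.mpr h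
  have := c.length_filter_edgeChanges_ne_one f
  omega

end Walk

theorem isNACColoring_edgeChanges {f : V → α} {g : V → β}
    (hfg : ∀ ⦃u v⦄, G.Adj u v → (f u = f v ↔ g u ≠ g v))
    (hred : ∃ u v, G.Adj u v ∧ f u ≠ f v) (hblue : ∃ u v, G.Adj u v ∧ f u = f v) :
    IsNACColoring G (edgeChanges f) := by
  obtain ⟨u, v, huv, hred⟩ := hred
  obtain ⟨x, y, hxy, hblue⟩ := hblue
  refine ⟨⟨s(u, v), huv, by simpa using hred⟩, ⟨s(x, y), hxy, by simpa using hblue⟩, ?_⟩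
  intro w c _
  have hcompl : c.edges.filter (fun e => !edgeChanges f e) = c.edges.filter (edgeChanges g) := by
    refine List.filter_congr fun e he => ?_
    induction e using Sym2.ind with
    | h a b => simp [hfg (c.adj_of_mem_edges he)]
  by_cases hall_red : ∀ e ∈ c.edges, edgeChanges f e = true
  · exact Or.inl hall_red
  by_cases hall_blue : ∀ e ∈ c.edges, edgeChanges f e = false
  · exact Or.inr (Or.inl hall_blue)
  push Not at hall_red hall_blue
  obtain ⟨e, he, hblue_e⟩ := hall_red
  have hg_e : e ∈ c.edges.filter (edgeChanges g) :=
    hcompl ▸ List.mem_filter.mpr ⟨he, by simpa using hblue_e⟩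
  refine Or.inr (Or.inr ⟨c.two_le_length_filter_edgeChanges f (by simpa using hall_blue), ?_⟩)
  rw [hcompl]
  exact c.two_le_length_filter_edgeChanges g ⟨e, he, List.of_mem_filter hg_e⟩

end SimpleGraph

theorem sub_apply_sub_sub_apply_eq_zero_iff {ι R : Type*} [AddCommGroup R] (x y : ι → R)
    (i j : ι) : (x - y) i - (x - y) j = 0 ↔ x i - x j = y i - y j := by
  rw [Pi.sub_apply, Pi.sub_apply, sub_sub_sub_comm, sub_eq_zero]

def spatialVectors : Set (Fin 3 → ℝ) :=
  {x | ∃ d ∈ spatialDirs, ∃ c : ℝ, c ≠ 0 ∧ x = c • d}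

theorem mem_spatialVectors_of_ne_zero {x : Fin 3 → ℝ} (hx : x ≠ 0)
    (h : ∃ d ∈ spatialDirs, ∃ c : ℝ, x = c • d) : x ∈ spatialVectors := by
  obtain ⟨d, hd, c, rfl⟩ := h
  exact ⟨d, hd, c, left_ne_zero_of_smul hx, rfl⟩

theorem sub_eq_zero_iff_ne_zero_of_mem_spatialVectors {x : Fin 3 → ℝ} (hx : x ∈ spatialVectors)
    {j k : Fin 3} (hj : j ≠ 0) (hk : k ≠ 0) (hjk : j ≠ k) : x 0 - x j = 0 ↔ x k ≠ 0 := by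
  obtain ⟨d, hd, c, hc, rfl⟩ := hx
  simp only [spatialDirs, Set.mem_insert_iff, Set.mem_singleton_iff] at hd
  fin_cases j <;> fin_cases k <;> simp at hj hk hjk <;>
    rcases hd with rfl | rfl | rfl | rfl <;> simp [hc]

theorem eq_of_mem_spatialDirs {d d' : Fin 3 → ℝ} (hd : d ∈ spatialDirs) (hd' : d' ∈ spatialDirs)
    (h₁ : d 0 - d 1 = 0 ↔ d' 0 - d' 1 = 0) (h₂ : d 0 - d 2 = 0 ↔ d' 0 - d' 2 = 0) : d = d' := by
  simp only [spatialDirs, Set.mem_insert_iff, Set.mem_singleton_iff] at hd hd'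
  revert h₁ h₂
  rcases hd with rfl | rfl | rfl | rfl <;> rcases hd' with rfl | rfl | rfl | rfl <;> simp

theorem exists_smul_eq_iff_of_mem_spatialVectors {x y : Fin 3 → ℝ} (hx : x ∈ spatialVectors)
    (hy : y ∈ spatialVectors) :
    (∃ c : ℝ, c ≠ 0 ∧ x = c • y) ↔
      (x 0 - x 1 = 0 ↔ y 0 - y 1 = 0) ∧ (x 0 - x 2 = 0 ↔ y 0 - y 2 = 0) := by
  constructor
  · rintro ⟨c, hc, rfl⟩
    simp only [Pi.smul_apply, smul_eq_mul, ← mul_sub, mul_eq_zero, hc, false_or, and_self]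
  · obtain ⟨d, hd, a, ha, rfl⟩ := hx
    obtain ⟨d', hd', b, hb, rfl⟩ := hy
    simp only [Pi.smul_apply, smul_eq_mul, ← mul_sub, mul_eq_zero, ha, hb, false_or]
    rintro ⟨h₁, h₂⟩
    refine ⟨a / b, div_ne_zero ha hb, ?_⟩
    rw [eq_of_mem_spatialDirs hd hd' h₁ h₂, smul_smul, div_mul_cancel₀ a hb]

theorem isNACColoring_edgeChanges_coord_sub {G : SimpleGraph V} {ω : V → Fin 3 → ℝ}
    (hvec : ∀ ⦃u v⦄, G.Adj u v → ω u - ω v ∈ spatialVectors)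
    (hred : ∃ u v, G.Adj u v ∧ ∃ c : ℝ, ω u - ω v = c • ![1, 0, 0])
    (hblue : ∃ u v, G.Adj u v ∧ ∃ c : ℝ, ω u - ω v = c • ![-1, -1, -1])
    {j k : Fin 3} (hj : j ≠ 0) (hk : k ≠ 0) (hjk : j ≠ k) :
    IsNACColoring G (edgeChanges fun w => ω w 0 - ω w j) := by
  have hfg : ∀ ⦃u v⦄, G.Adj u v → (ω u 0 - ω u j = ω v 0 - ω v j ↔ ω u k ≠ ω v k) := by
    intro u v huv
    have key := sub_eq_zero_iff_ne_zero_of_mem_spatialVectors (hvec huv) hj hk hjk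
    rwa [sub_apply_sub_sub_apply_eq_zero_iff, Pi.sub_apply, sub_ne_zero] at key
  refine isNACColoring_edgeChanges (g := fun w => ω w k) hfg ?_ ?_
  · obtain ⟨u, v, huv, c, hc⟩ := hred
    have hk0 : ω u k - ω v k = 0 := by
      have := congrFun hc k
      fin_cases k <;> simp_all
    exact ⟨u, v, huv, fun h => (hfg huv).mp h (sub_eq_zero.mp hk0)⟩
  · obtain ⟨u, v, huv, c, hc⟩ := hblue
    have hcoord : ∀ i, ω u i - ω v i = -c := fun i => by
      have := congrFun hc i
      fin_cases i <;> simp_all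
    exact ⟨u, v, huv, by linarith [hcoord 0, hcoord j]⟩

theorem NAC_pair_of_spatial_embedding_general (G : SimpleGraph V)
    (ω : V → Fin 3 → ℝ) (hinj : Function.Injective ω)
    (hpar : ∀ u v : V, G.Adj u v → ∃ d ∈ spatialDirs, ∃ c : ℝ, ω u - ω v = c • d)
    (hall : ∀ d ∈ spatialDirs, ∃ u v : V, G.Adj u v ∧ ∃ c : ℝ, ω u - ω v = c • d) :
    ∃ δ₁ δ₂ : Sym2 V → Bool, IsNACColoring G δ₁ ∧ IsNACColoring G δ₂ ∧
      ∀ u v x y : V, G.Adj u v → G.Adj x y →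
        ((∃ c : ℝ, c ≠ 0 ∧ ω u - ω v = c • (ω x - ω y)) ↔
          (δ₁ s(u, v) = δ₁ s(x, y) ∧ δ₂ s(u, v) = δ₂ s(x, y))) := by
  have hvec : ∀ ⦃u v⦄, G.Adj u v → ω u - ω v ∈ spatialVectors := fun u v huv =>
    mem_spatialVectors_of_ne_zero (sub_ne_zero.mpr (hinj.ne huv.ne)) (hpar u v huv)
  have hred := hall ![1, 0, 0] (by simp [spatialDirs])
  have hblue := hall ![-1, -1, -1] (by simp [spatialDirs])
  refine ⟨edgeChanges fun w => ω w 0 - ω w 1, edgeChanges fun w => ω w 0 - ω w 2,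
    isNACColoring_edgeChanges_coord_sub hvec hred hblue (k := 2) (by decide) (by decide) (by decide),
    isNACColoring_edgeChanges_coord_sub hvec hred hblue (k := 1) (by decide) (by decide) (by decide),
    fun u v x y huv hxy => ?_⟩
  simp only [edgeChanges_mk, decide_eq_decide, ne_eq, not_iff_not,
    ← sub_apply_sub_sub_apply_eq_zero_iff]
  exact exists_smul_eq_iff_of_mem_spatialVectors (hvec huv) (hvec hxy)

/-- A graph with an injective spatial embedding whose edges are parallel to the four
directions, all occurring, has two NAC-colorings detecting parallelism of edges. -/
theorem NAC_pair_of_spatial_embedding [Fintype V] (G : SimpleGraph V)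
    (ω : V → Fin 3 → ℝ) (hinj : Function.Injective ω)
    (hpar : ∀ u v : V, G.Adj u v → ∃ d ∈ spatialDirs, ∃ c : ℝ, ω u - ω v = c • d)
    (hall : ∀ d ∈ spatialDirs, ∃ u v : V, G.Adj u v ∧ ∃ c : ℝ, ω u - ω v = c • d) :
    ∃ δ₁ δ₂ : Sym2 V → Bool, IsNACColoring G δ₁ ∧ IsNACColoring G δ₂ ∧
      ∀ u v x y : V, G.Adj u v → G.Adj x y →
        ((∃ c : ℝ, c ≠ 0 ∧ ω u - ω v = c • (ω x - ω y)) ↔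
          (δ₁ s(u, v) = δ₁ s(x, y) ∧ δ₂ s(u, v) = δ₂ s(x, y))) :=
  NAC_pair_of_spatial_embedding_general G ω hinj hpar hall
end

section
/- For every n ≥ 3, the complete graph K_n has no NAC-coloring. -/
open SimpleGraph Real

variable {V : Type*}

lemma tri_cycle {V : Type*} {u v w : V} (huv : u ≠ v) (hvw : v ≠ w) (huw : u ≠ w) :
    (Walk.cons ((top_adj u v).mpr huv)
      (Walk.cons ((top_adj v w).mpr hvw)
        (Walk.cons ((top_adj w u).mpr huw.symm) (Walk.nil : (⊤:SimpleGraph V).Walk u u)))).IsCycle := by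
  simp [Walk.isCycle_def, Walk.isTrail_def, Sym2.eq, Sym2.rel_iff', huv, hvw, huw, huv.symm, hvw.symm, huw.symm]

lemma no_bad_tri {V : Type*} (δ : Sym2 V → Bool)
    (h : ∀ ⦃v : V⦄ (c : (⊤:SimpleGraph V).Walk v v), c.IsCycle →
      (∀ e ∈ c.edges, δ e = true) ∨ (∀ e ∈ c.edges, δ e = false) ∨
        (2 ≤ (c.edges.filter (fun e => δ e)).length ∧
          2 ≤ (c.edges.filter (fun e => !(δ e))).length))
    {u v w : V} (huv : u ≠ v) (hvw : v ≠ w) (huw : u ≠ w) :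
    δ s(u, v) = δ s(v, w) := by
  by_contra hne
  have := h _ (tri_cycle huv hvw huw)
  simp only [Walk.edges_cons, Walk.edges_nil] at this
  rcases this with h1 | h1 | ⟨h1, h2⟩
  · exact hne ((h1 _ (by simp)).trans (h1 _ (by simp)).symm)
  · exact hne ((h1 _ (by simp)).trans (h1 _ (by simp)).symm)
  · cases hd1 : δ s(u,v) <;> cases hd2 : δ s(v,w) <;> cases hd3 : δ s(w,u) <;>
      simp [hd1, hd2, hd3, List.filter] at h1 h2 hne


/-- For `n ≥ 3` the complete graph `K_n` has no NAC-coloring. -/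
theorem complete_graph_no_NAC (n : ℕ) (hn : 3 ≤ n) (δ : Sym2 (Fin n) → Bool) :
    ¬ IsNACColoring (⊤ : SimpleGraph (Fin n)) δ := by
  rintro ⟨⟨e1, he1, hT⟩, ⟨e2, he2, hF⟩, hcyc⟩
  induction e1 using Sym2.ind with | _ a b =>
  induction e2 using Sym2.ind with | _ c d =>
  simp only [edgeSet_top, Set.mem_setOf_eq, Sym2.isDiag_iff_proj_eq] at he1 he2
  have key : ∀ {u v w : Fin n}, u ≠ v → v ≠ w → u ≠ w → δ s(u, v) = δ s(v, w) :=
    fun h1 h2 h3 => no_bad_tri δ hcyc h1 h2 h3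
  have hne : s(a, b) ≠ s(c, d) := fun h => by rw [h, hF] at hT; exact Bool.false_ne_true hT
  by_cases hac : a = c
  · subst hac
    have hbd : b ≠ d := fun h => hne (by rw [h])
    have h1 : δ s(b, a) = δ s(a, d) := key (Ne.symm he1) he2 hbd
    have e1 : s(b, a) = s(a, b) := Sym2.eq_swap
    rw [e1] at h1
    rw [h1, hF] at hT; exact Bool.false_ne_true hT
  · by_cases had : a = d
    · subst had
      have hbc : b ≠ c := fun h => hne (by rw [h, Sym2.eq_swap])
      have h1 : δ s(b, a) = δ s(a, c) := key (Ne.symm he1) (fun h => he2 h.symm) hbc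
      have e1 : s(b, a) = s(a, b) := Sym2.eq_swap
      have e2 : s(a, c) = s(c, a) := Sym2.eq_swap
      rw [e1, e2] at h1
      rw [h1, hF] at hT; exact Bool.false_ne_true hT
    · by_cases hbc : b = c
      · subst hbc
        have h1 : δ s(a, b) = δ s(b, d) := key he1 he2 had
        rw [h1, hF] at hT; exact Bool.false_ne_true hT
      · by_cases hbd : b = d
        · subst hbd
          have h1 : δ s(a, b) = δ s(b, c) := key he1 (fun h => he2 h.symm) hac
          have e1 : s(b, c) = s(c, b) := Sym2.eq_swap
          rw [e1] at h1
          rw [h1, hF] at hT; exact Bool.false_ne_true hT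
        · have h1 : δ s(a, b) = δ s(b, c) := key he1 hbc hac
          have h2 : δ s(b, c) = δ s(c, d) := key hbc he2 hbd
          rw [h1, h2, hF] at hT; exact Bool.false_ne_true hT
end

section
/- The 3-prism graph (two triangles {0,3,4} and {1,2,5} joined by the edges 05, 14, 23) is movable, i.e., it has a proper flexible labeling. -/
open SimpleGraph Real

variable {V : Type*}

/-- The 3-prism graph: triangles `{0,3,4}` and `{1,2,5}` joined by the edges
`05`, `14`, `23`. -/
def Prism : SimpleGraph (Fin 6) :=
  SimpleGraph.fromEdgeSet
    {s(0, 4), s(0, 3), s(3, 4), s(1, 2), s(1, 5), s(2, 5), s(0, 5), s(1, 4), s(2, 3)}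

/-!
The prism is `K₂ □ K₃`: vertex `v` has a side `prismSide v ∈ {0, 1}` and a level
`prismLevel v ∈ {0, 1, 2}`, the triangles join vertices on the same side and the edges
`05`, `14`, `23` join vertices on the same level. Place `v` at `side • e₁ + level • w` with
`w` a unit vector. Each triangle becomes a (degenerate, collinear) segment of direction `w`
and each connecting edge the vector `e₁`, so rotating `w` preserves all edge lengths, while
`‖p 1 - p 0‖² = 2 + 2 ⟪e₁, w⟫` changes. As long as `w` is not parallel to `e₁` the
placement is injective, since `v ↦ (side, level)` is.
-/

open InnerProductSpace

section ParallelMotion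

variable {V E : Type*} [NormedAddCommGroup E] [InnerProductSpace ℝ E]

def parallelMotion (a : V → E) (m : V → ℝ) (w : E) (v : V) : E := a v + m v • w

lemma dist_parallelMotion_sq (a : V → E) (m : V → ℝ) (w : E) (u v : V) :
    dist (parallelMotion a m w u) (parallelMotion a m w v) ^ 2 =
      ‖a u - a v‖ ^ 2 + 2 * (m u - m v) * ⟪a u - a v, w⟫_ℝ + (m u - m v) ^ 2 * ‖w‖ ^ 2 := by
  have hsub : parallelMotion a m w u - parallelMotion a m w v =
      (a u - a v) + (m u - m v) • w := by
    simp only [parallelMotion, sub_smul]; abel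
  rw [dist_eq_norm, hsub, norm_add_sq_real, inner_smul_right, norm_smul, mul_pow,
    Real.norm_eq_abs, sq_abs]
  ring

lemma dist_parallelMotion_eq {a : V → E} {m : V → ℝ} {w w' : E} (hw : ‖w‖ = ‖w'‖) {u v : V}
    (h : a u = a v ∨ m u = m v) :
    dist (parallelMotion a m w u) (parallelMotion a m w v) =
      dist (parallelMotion a m w' u) (parallelMotion a m w' v) := by
  refine (pow_left_inj₀ dist_nonneg dist_nonneg two_ne_zero).mp ?_
  rw [dist_parallelMotion_sq, dist_parallelMotion_sq, hw]
  rcases h with h | h <;> simp [h]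

lemma parallelMotion_injective {x m : V → ℝ} {e w : E} (hew : LinearIndependent ℝ ![e, w])
    (hxm : Function.Injective fun v => (x v, m v)) :
    Function.Injective (parallelMotion (fun v => x v • e) m w) := fun _ _ h =>
  hxm (Prod.ext_iff.mpr (hew.eq_of_pair h))

end ParallelMotion

section Movability

variable {V : Type*} {G : SimpleGraph V}

lemma IsPlacement.of_injective {p : V → Plane} (hp : Function.Injective p) : IsPlacement G p :=
  fun _ _ huv => hp.ne huv.ne

noncomputable def inducedLabeling (p : V → Plane) : Sym2 V → ℝ :=
  Sym2.lift ⟨fun u v => dist (p u) (p v), fun _ _ => dist_comm _ _⟩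

lemma induces_inducedLabeling (p : V → Plane) : Induces G p (inducedLabeling p) :=
  fun _ _ _ => rfl

lemma IsPlacement.inducedLabeling_pos {p : V → Plane} (hp : IsPlacement G p) :
    ∀ e ∈ G.edgeSet, 0 < inducedLabeling p e := by
  intro e he
  induction e using Sym2.ind with
  | _ u v => exact dist_pos.mpr (hp he)

theorem movable_of_isFlex {p : V → Plane} {f : ℝ → V → Plane} (hf : IsFlex G p f)
    (hnt : ¬ IsTrivialFlex p f)
    (hfin : {t ∈ Set.Icc (0 : ℝ) 1 | ¬ Function.Injective (f t)}.Finite) : Movable G := by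
  have hp : IsPlacement G p := hf.2.1 ▸ (hf.2.2 0 ⟨le_rfl, zero_le_one⟩).1
  exact ⟨inducedLabeling p, hp.inducedLabeling_pos, p, induces_inducedLabeling p,
    f, hf, hnt, hfin⟩

theorem isFlex_parallelMotion {a : V → Plane} {m : V → ℝ} {w : ℝ → Plane}
    (hw : Continuous w) (hnorm : ∀ t, ‖w t‖ = ‖w 0‖)
    (hG : ∀ ⦃u v⦄, G.Adj u v → a u = a v ∨ m u = m v)
    (hinj : ∀ t ∈ Set.Icc (0 : ℝ) 1, Function.Injective (parallelMotion a m (w t))) :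
    IsFlex G (parallelMotion a m (w 0)) fun t => parallelMotion a m (w t) := by
  refine ⟨Continuous.continuousOn ?_, rfl, fun t ht => ⟨.of_injective (hinj t ht), ?_⟩⟩
  · unfold parallelMotion; fun_prop
  · exact fun u v huv => dist_parallelMotion_eq (hnorm t).symm (hG huv)

end Movability

section Prism

def prismSide : Fin 6 → ℝ := ![0, 1, 1, 0, 0, 1]

def prismLevel : Fin 6 → ℝ := ![0, 1, 2, 2, 1, 0]

noncomputable def prismDir (t : ℝ) : Plane := !₂[sin t, cos t]

noncomputable def prismFlex (t : ℝ) : Fin 6 → Plane :=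
  parallelMotion (fun v => prismSide v • !₂[1, 0]) prismLevel (prismDir t)

lemma prism_adj_side_or_level {u v : Fin 6} (h : Prism.Adj u v) :
    prismSide u = prismSide v ∨ prismLevel u = prismLevel v := by
  revert h
  fin_cases u <;> fin_cases v <;> simp [Prism, prismSide, prismLevel]

lemma prismSide_prismLevel_injective :
    Function.Injective fun v => (prismSide v, prismLevel v) := by
  intro u v
  fin_cases u <;> fin_cases v <;> norm_num [prismSide, prismLevel]

lemma norm_prismDir (t : ℝ) : ‖prismDir t‖ = 1 := by
  simp [prismDir, EuclideanSpace.norm_eq, Fin.sum_univ_two]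

lemma inner_prismDir (t : ℝ) : ⟪!₂[1, 0], prismDir t⟫_ℝ = sin t := by
  simp [prismDir, PiLp.inner_apply, Fin.sum_univ_two]

lemma linearIndependent_prismDir {t : ℝ} (ht : cos t ≠ 0) :
    LinearIndependent ℝ ![!₂[1, 0], prismDir t] := by
  refine LinearIndependent.pair_iffₛ.mpr fun s r s' r' h => ?_
  have h0 := congrArg (· 0) h
  have h1 := congrArg (· 1) h
  simp only [prismDir, PiLp.add_apply, PiLp.smul_apply, smul_eq_mul, Matrix.cons_val_zero,
    Matrix.cons_val_one, Matrix.cons_val_fin_one, mul_one, mul_zero, zero_add,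
    mul_eq_mul_right_iff] at h0 h1
  obtain rfl := h1.resolve_right ht
  exact ⟨by linarith, rfl⟩

lemma continuous_prismDir : Continuous prismDir := by
  unfold prismDir; fun_prop

lemma dist_prismFlex_one_zero_sq (t : ℝ) :
    dist (prismFlex t 1) (prismFlex t 0) ^ 2 = 2 + 2 * sin t := by
  have hside : prismSide 1 • !₂[1, 0] - prismSide 0 • !₂[1, 0] = (!₂[1, 0] : Plane) := by
    simp [prismSide]
  have hlevel : prismLevel 1 - prismLevel 0 = 1 := by simp [prismLevel]
  have hnorm : ‖(!₂[1, 0] : Plane)‖ = 1 := by simp [EuclideanSpace.norm_eq]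
  rw [prismFlex, dist_parallelMotion_sq, hside, hlevel, hnorm, norm_prismDir, inner_prismDir]
  ring

lemma not_isTrivialFlex_prismFlex : ¬ IsTrivialFlex (prismFlex 0) prismFlex := by
  intro h
  have h1 := congrArg (· ^ 2) (h 1 ⟨zero_le_one, le_rfl⟩ 1 0)
  simp only [dist_prismFlex_one_zero_sq, sin_zero] at h1
  exact (sin_pos_of_pos_of_lt_pi one_pos (by linarith [pi_gt_three])).ne' (by linarith)

end Prism

/-- The 3-prism graph is movable: it has a proper flexible labeling. -/
theorem prism_movable : Movable Prism := by
  have hinj (t : ℝ) (ht : t ∈ Set.Icc (0 : ℝ) 1) : Function.Injective (prismFlex t) := by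
    have hcos : cos t ≠ 0 :=
      (cos_pos_of_mem_Ioo ⟨by linarith [ht.1, pi_gt_three], by linarith [ht.2, pi_gt_three]⟩).ne'
    exact parallelMotion_injective (linearIndependent_prismDir hcos)
      prismSide_prismLevel_injective
  have hflex : IsFlex Prism (prismFlex 0) prismFlex :=
    isFlex_parallelMotion continuous_prismDir (fun t => by rw [norm_prismDir, norm_prismDir])
      (fun _ _ huv => (prism_adj_side_or_level huv).imp (congrArg (· • _)) id) hinj
  exact movable_of_isFlex hflex not_isTrivialFlex_prismFlex
    (Set.finite_empty.subset fun t ⟨ht, hni⟩ => hni (hinj t ht))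
end
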